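/- Let (Ω, F, P) be a probability space, let Ŝ : Ω → ℝ be a random variable taking values in [0,1], and let Y : Ω → ℝ be a random variable taking values in {0,1} such that the model is perfectly calibrated, i.e. E[Y | σ(Ŝ)] = Ŝ almost everywhere. Then E[ |Y − Ŝ| ] = 2·E[ Ŝ(1 − Ŝ) ]. Consequently, the TCD classification term d_cls = E[|Ŝ − Y|] is strictly positive whenever P(0 < Ŝ < 1) > 0, even though the classification calibration error CE_cls = E[|E[Y|σ(Ŝ)] − Ŝ|] equals 0. -/

import Mathlib

/-!
For `y ∈ {0, 1}` and `s ∈ [0, 1]` one has `|y - s| = (1 - s) y + s (1 - y)`. Calibration lets us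
replace `Y` by `Ŝ` inside any expectation `E[g(Ŝ) Y]` (pull `g(Ŝ)` out of `E[· | σ(Ŝ)]`), and
likewise `1 - Y` by `1 - Ŝ`, so `E[|Y - Ŝ|] = 2 E[Ŝ (1 - Ŝ)]`. The integrand `Ŝ (1 - Ŝ)` is
nonnegative and vanishes exactly off `{0 < Ŝ < 1}`, whence positivity; `CE_cls = 0` is immediate.
-/

open MeasureTheory Set

lemma abs_sub_eq_of_eq_zero_or_eq_one {y s : ℝ} (hy : y = 0 ∨ y = 1) (hs : s ∈ unitInterval) :
    |y - s| = (1 - s) * y + s * (1 - y) := by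
  rcases hy with rfl | rfl
  · rw [zero_sub, abs_neg, abs_of_nonneg hs.1]
    ring
  · rw [abs_of_nonneg (sub_nonneg.mpr hs.2)]
    ring

lemma mul_one_sub_ne_zero_iff {s : ℝ} (hs : s ∈ unitInterval) :
    s * (1 - s) ≠ 0 ↔ 0 < s ∧ s < 1 := by
  rw [mul_ne_zero_iff, sub_ne_zero, ne_comm (a := (1 : ℝ))]
  exact and_congr hs.1.lt_iff_ne'.symm hs.2.lt_iff_ne.symm

namespace MeasureTheory

variable {Ω : Type*} {m m₀ : MeasurableSpace Ω} {μ : Measure Ω}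

lemma Integrable.of_mem_unitInterval [IsFiniteMeasure μ] {f : Ω → ℝ}
    (hf : AEStronglyMeasurable f μ) (h01 : ∀ ω, f ω ∈ unitInterval) : Integrable f μ :=
  .of_bound hf 1 <| .of_forall fun ω => by
    rw [Real.norm_eq_abs, abs_le]
    constructor <;> linarith [(h01 ω).1, (h01 ω).2]

lemma integral_mul_eq_of_condExp_ae_eq (hm : m ≤ m₀) [SigmaFinite (μ.trim hm)]
    {f g h : Ω → ℝ} (hg : StronglyMeasurable[m] g) (hf : Integrable f μ)
    (hgf : Integrable (g * f) μ) (hfh : μ[f | m] =ᵐ[μ] h) :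
    ∫ ω, g ω * f ω ∂μ = ∫ ω, g ω * h ω ∂μ := by
  rw [← integral_condExp hm]
  exact integral_congr_ae <| (condExp_mul_of_stronglyMeasurable_left hg hgf hf).trans <|
    hfh.mono fun ω hω => by rw [Pi.mul_apply, hω]

lemma condExp_const_sub_ae_eq [IsFiniteMeasure μ] (hm : m ≤ m₀) (c : ℝ) {f h : Ω → ℝ}
    (hf : Integrable f μ) (hfh : μ[f | m] =ᵐ[μ] h) :
    μ[fun ω => c - f ω | m] =ᵐ[μ] fun ω => c - h ω := by
  refine (condExp_sub (integrable_const c) hf m).trans ?_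
  rw [condExp_const hm]
  exact hfh.mono fun ω hω => by rw [Pi.sub_apply, hω]

theorem integral_abs_sub_eq_of_condExp_ae_eq [IsFiniteMeasure μ] (hm : m ≤ m₀)
    {S Y : Ω → ℝ} (hS : StronglyMeasurable[m] S) (hY : AEStronglyMeasurable Y μ)
    (hS01 : ∀ ω, S ω ∈ unitInterval) (hY01 : ∀ ω, Y ω = 0 ∨ Y ω = 1)
    (hcal : μ[Y | m] =ᵐ[μ] S) :
    ∫ ω, |Y ω - S ω| ∂μ = 2 * ∫ ω, S ω * (1 - S ω) ∂μ := by
  have hY01' (ω : Ω) : Y ω ∈ unitInterval := by rcases hY01 ω with h | h <;> simp [h]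
  have hS' : AEStronglyMeasurable S μ := (hS.mono hm).aestronglyMeasurable
  have hYint : Integrable Y μ := .of_mem_unitInterval hY hY01'
  have hYSint : Integrable (fun ω => (1 - S ω) * Y ω) μ :=
    .of_mem_unitInterval ((aestronglyMeasurable_const.sub hS').mul hY) fun ω =>
      unitInterval.mul_mem (Icc.mem_iff_one_sub_mem.mp (hS01 ω)) (hY01' ω)
  have hSYint : Integrable (fun ω => S ω * (1 - Y ω)) μ :=
    .of_mem_unitInterval (hS'.mul (aestronglyMeasurable_const.sub hY)) fun ω =>
      unitInterval.mul_mem (hS01 ω) (Icc.mem_iff_one_sub_mem.mp (hY01' ω))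
  have hYS : ∫ ω, (1 - S ω) * Y ω ∂μ = ∫ ω, S ω * (1 - S ω) ∂μ := by
    simp_rw [mul_comm (S _)]
    exact integral_mul_eq_of_condExp_ae_eq hm (stronglyMeasurable_const.sub hS) hYint hYSint hcal
  have hSY : ∫ ω, S ω * (1 - Y ω) ∂μ = ∫ ω, S ω * (1 - S ω) ∂μ :=
    integral_mul_eq_of_condExp_ae_eq hm hS (integrable_const 1 |>.sub hYint) hSYint
      (condExp_const_sub_ae_eq hm 1 hYint hcal)
  calc ∫ ω, |Y ω - S ω| ∂μ = ∫ ω, (1 - S ω) * Y ω + S ω * (1 - Y ω) ∂μ := by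
        simp_rw [abs_sub_eq_of_eq_zero_or_eq_one (hY01 _) (hS01 _)]
    _ = 2 * ∫ ω, S ω * (1 - S ω) ∂μ := by
        rw [integral_add hYSint hSYint, hYS, hSY, two_mul]

lemma integral_mul_one_sub_pos [IsFiniteMeasure μ] {S : Ω → ℝ} (hS : AEStronglyMeasurable S μ)
    (hS01 : ∀ ω, S ω ∈ unitInterval) (hpos : 0 < μ {ω | 0 < S ω ∧ S ω < 1}) :
    0 < ∫ ω, S ω * (1 - S ω) ∂μ := by
  have hmem (ω : Ω) : S ω * (1 - S ω) ∈ unitInterval :=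
    unitInterval.mul_mem (hS01 ω) (Icc.mem_iff_one_sub_mem.mp (hS01 ω))
  have hsupp : Function.support (fun ω => S ω * (1 - S ω)) = {ω | 0 < S ω ∧ S ω < 1} := by
    ext ω
    exact mul_one_sub_ne_zero_iff (hS01 ω)
  rw [integral_pos_iff_support_of_nonneg (fun ω => (hmem ω).1)
    (.of_mem_unitInterval (hS.mul (aestronglyMeasurable_const.sub hS)) hmem), hsupp]
  exact hpos

end MeasureTheory

/-- For a perfectly calibrated binary predictor (`E[Y|σ(Ŝ)] = Ŝ` a.e.):
`E[|Y − Ŝ|] = 2·E[Ŝ(1 − Ŝ)]`; consequently `d_cls = E[|Ŝ − Y|]` is strictly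
positive whenever `P(0 < Ŝ < 1) > 0`, even though `CE_cls = E[|E[Y|σ(Ŝ)] − Ŝ|] = 0`. -/
theorem dcls_positive_of_perfect_calibration
    {Ω : Type*} {F : MeasurableSpace Ω} {μ : Measure Ω} [IsProbabilityMeasure μ]
    {S Y : Ω → ℝ} (hS : Measurable S) (hY : Measurable Y)
    (hS01 : ∀ ω, S ω ∈ Set.Icc (0 : ℝ) 1) (hY01 : ∀ ω, Y ω = 0 ∨ Y ω = 1)
    (hcal : μ[Y | MeasurableSpace.comap S Real.measurableSpace] =ᵐ[μ] S) :
    (∫ ω, |Y ω - S ω| ∂μ = 2 * ∫ ω, S ω * (1 - S ω) ∂μ) ∧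
    (0 < μ {ω | 0 < S ω ∧ S ω < 1} → 0 < ∫ ω, |S ω - Y ω| ∂μ) ∧
    ∫ ω, |(μ[Y | MeasurableSpace.comap S Real.measurableSpace]) ω - S ω| ∂μ = 0 := by
  have hmain := integral_abs_sub_eq_of_condExp_ae_eq hS.comap_le
    (Measurable.of_comap_le le_rfl).stronglyMeasurable hY.aestronglyMeasurable hS01 hY01 hcal
  refine ⟨hmain, fun hpos => ?_, ?_⟩
  · simp_rw [abs_sub_comm (S _), hmain]
    exact mul_pos two_pos (integral_mul_one_sub_pos hS.aestronglyMeasurable hS01 hpos)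
  · rw [integral_congr_ae (hcal.mono fun ω h => by rw [h, sub_self, abs_zero]), integral_zero]
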